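/- arXiv:2403.09839 — 2 statements merged into one kernel-verified Lean document; each statement's English description precedes it below -/
import Mathlib

section
/- Let Φ be a Young function, φ ∈ G₁^dec, and let ψ:ℝⁿ→ℝⁿ be a measurable nonsingular map. Then the composition operator C_ψ is bounded on the weak Orlicz–Morrey space wM_Φ^φ(ℝⁿ) if and only if there exists a constant K>0 such that for every measurable set A⊂ℝⁿ, ‖χ_{ψ⁻¹(A)}‖_{M_Φ^φ} ≤ K‖χ_A‖_{M_Φ^φ}. -/
open MeasureTheory Filter Set
open scoped ENNReal NNReal

noncomputable section

/-- A Young function: convex on `[0,∞)`, vanishing at `0`, nonnegative, tending to `∞`. -/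
def IsYoung (Φ : ℝ → ℝ) : Prop :=
  ConvexOn ℝ (Set.Ici 0) Φ ∧ Φ 0 = 0 ∧ (∀ t, 0 ≤ t → 0 ≤ Φ t) ∧
    Filter.Tendsto Φ Filter.atTop Filter.atTop

/-- Almost decreasing on `(0,∞)`: `g s ≤ C * g r` whenever `0 < r < s`. -/
def AlmostDecreasingOn (g : ℝ → ℝ) : Prop :=
  ∃ C > 0, ∀ r s : ℝ, 0 < r → r < s → g s ≤ C * g r

/-- Almost increasing on `(0,∞)`: `g r ≤ C * g s` whenever `0 < r < s`. -/
def AlmostIncreasingOn (g : ℝ → ℝ) : Prop :=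
  ∃ C > 0, ∀ r s : ℝ, 0 < r → r < s → g r ≤ C * g s

/-- The class `G₁^dec`: positive, almost decreasing and submultiplicative on `(0,∞)`. -/
def G1dec (φ : ℝ → ℝ) : Prop :=
  (∀ r : ℝ, 0 < r → 0 < φ r) ∧ AlmostDecreasingOn φ ∧
    ∃ C > 0, ∀ r s : ℝ, 0 < r → 0 < s → φ (r * s) ≤ C * φ r * φ s

/-- The class `G₂^dec`: `φ ∈ G₀ ∩ G₁^dec` and `φ(1/r) ≤ C/φ(r)`. -/
def G2dec (φ : ℝ → ℝ) : Prop :=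
  G1dec φ ∧ Filter.Tendsto φ (nhdsWithin 0 (Set.Ioi 0)) Filter.atTop ∧
    Filter.Tendsto φ Filter.atTop (nhds 0) ∧
    ∃ C > 0, ∀ r : ℝ, 0 < r → φ r⁻¹ ≤ C / φ r

/-- Generalized inverse of a Young function: `Φ⁻¹(u) = inf {t ≥ 0 : Φ(t) > u}`. -/
def yInv (Φ : ℝ → ℝ) (u : ℝ) : ℝ := sInf {t : ℝ | 0 ≤ t ∧ u < Φ t}

/-- The Luxemburg-type norm of `f` on the ball `B(a,r)`:
`inf {λ > 0 : (1/|B|) ∫_B Φ(|f|/λ) ≤ 1}` (as an extended nonnegative real). -/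
def ballLux {n : ℕ} (Φ : ℝ → ℝ) (a : EuclideanSpace ℝ (Fin n)) (r : ℝ)
    (f : EuclideanSpace ℝ (Fin n) → ℝ) : ℝ≥0∞ :=
  sInf {lam : ℝ≥0∞ | ∃ l : ℝ, 0 < l ∧ lam = ENNReal.ofReal l ∧
    (∫ x in Metric.ball a r, Φ (|f x| / l)) ≤ (volume (Metric.ball a r)).toReal}

/-- The Orlicz–Morrey norm `‖f‖_{M_Φ^φ} = sup_{a, r>0} (1/φ(r)) ‖f‖_{Φ,B(a,r)}`. -/
def omNorm {n : ℕ} (Φ φ : ℝ → ℝ) (f : EuclideanSpace ℝ (Fin n) → ℝ) : ℝ≥0∞ :=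
  ⨆ (a : EuclideanSpace ℝ (Fin n)) (r : ℝ) (_ : 0 < r),
    (ENNReal.ofReal (φ r))⁻¹ * ballLux Φ a r f

/-- The weak Luxemburg-type norm of `f` on the ball `B(a,r)`:
`inf {λ > 0 : sup_{t>0} Φ(t)·m(B, f/λ, t) ≤ |B|}`. -/
def ballLuxWeak {n : ℕ} (Φ : ℝ → ℝ) (a : EuclideanSpace ℝ (Fin n)) (r : ℝ)
    (f : EuclideanSpace ℝ (Fin n) → ℝ) : ℝ≥0∞ :=
  sInf {lam : ℝ≥0∞ | ∃ l : ℝ, 0 < l ∧ lam = ENNReal.ofReal l ∧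
    ∀ t : ℝ, 0 < t →
      ENNReal.ofReal (Φ t) * volume {x | x ∈ Metric.ball a r ∧ t < |f x| / l} ≤
        volume (Metric.ball a r)}

/-- The weak Orlicz–Morrey norm `‖f‖_{wM_Φ^φ}`. -/
def womNorm {n : ℕ} (Φ φ : ℝ → ℝ) (f : EuclideanSpace ℝ (Fin n) → ℝ) : ℝ≥0∞ :=
  ⨆ (a : EuclideanSpace ℝ (Fin n)) (r : ℝ) (_ : 0 < r),
    (ENNReal.ofReal (φ r))⁻¹ * ballLuxWeak Φ a r f

end

/-!
For an indicator `χ_E` the strong and the weak local Luxemburg norms coincide: both conditions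
only ask that `Φ(t) |B ∩ E| ≤ |B|` for `t` up to (or below) `1/λ`. Hence the hypothesis on
indicators is the same in `M_Φ^φ` and in `wM_Φ^φ`, and the forward implication is the case
`f = χ_A`. Conversely, by Chebyshev's inequality in the weak norm, the superlevel set
`E = {|f| > λt}` satisfies `λt ‖χ_E‖_{wM} ≤ ‖f‖_{wM}`; applying the hypothesis to `E` bounds
`‖χ_{ψ⁻¹E}‖` on a ball `B(a,r)` by `φ(r) K ‖f‖_{wM} / (λt)`, which for `λ > φ(r) K ‖f‖_{wM}`
is `< 1/t`, and this is exactly the weak condition for `f ∘ ψ` at height `t`.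
-/

section OrliczMorrey

variable {n : ℕ} {Φ φ : ℝ → ℝ} {a : EuclideanSpace ℝ (Fin n)} {r : ℝ}

local notation "χ[" E "]" => Set.indicator E (fun _ => (1 : ℝ))

theorem IsYoung.monotoneOn (hΦ : IsYoung Φ) : MonotoneOn Φ (Ici 0) := by
  intro s hs t ht hst
  rcases hst.eq_or_lt with rfl | hlt
  · rfl
  have ht0 : 0 < t := (mem_Ici.1 hs).trans_lt hlt
  have hc : s / t ≤ 1 := div_le_one_of_le₀ hst ht0.le
  have hconv := hΦ.1.2 (mem_Ici.2 le_rfl) ht (sub_nonneg.2 hc) (div_nonneg hs ht0.le)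
    (sub_add_cancel 1 (s / t))
  simp only [smul_eq_mul, mul_zero, zero_add, hΦ.2.1, div_mul_cancel₀ s ht0.ne'] at hconv
  exact hconv.trans (mul_le_of_le_one_left (hΦ.2.2.1 t ht) hc)

theorem sInf_ofReal_le_of_forall_lt {P : ℝ → Prop} {c : ℝ≥0∞}
    (h : ∀ l : ℝ, 0 < l → c < ENNReal.ofReal l → P l) :
    sInf {lam : ℝ≥0∞ | ∃ l : ℝ, 0 < l ∧ lam = ENNReal.ofReal l ∧ P l} ≤ c := by
  refine le_of_forall_gt fun d hcd => ?_
  obtain ⟨l, -, hcl, hld⟩ := ENNReal.lt_iff_exists_real_btwn.1 hcd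
  have hl : 0 < l := ENNReal.ofReal_pos.1 (zero_le.trans_lt hcl)
  exact lt_of_le_of_lt (sInf_le ⟨l, hl, rfl, h l hl hcl⟩) hld

def LuxAdmissible (Φ : ℝ → ℝ) (a : EuclideanSpace ℝ (Fin n)) (r : ℝ)
    (f : EuclideanSpace ℝ (Fin n) → ℝ) (l : ℝ) : Prop :=
  (∫ x in Metric.ball a r, Φ (|f x| / l)) ≤ (volume (Metric.ball a r)).toReal

def WeakLuxAdmissible (Φ : ℝ → ℝ) (a : EuclideanSpace ℝ (Fin n)) (r : ℝ)
    (f : EuclideanSpace ℝ (Fin n) → ℝ) (l : ℝ) : Prop :=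
  ∀ t : ℝ, 0 < t →
    ENNReal.ofReal (Φ t) * volume {x | x ∈ Metric.ball a r ∧ t < |f x| / l} ≤
      volume (Metric.ball a r)

theorem ballLux_eq_sInf (f : EuclideanSpace ℝ (Fin n) → ℝ) : ballLux Φ a r f =
    sInf {lam | ∃ l : ℝ, 0 < l ∧ lam = ENNReal.ofReal l ∧ LuxAdmissible Φ a r f l} := rfl

theorem ballLuxWeak_eq_sInf (f : EuclideanSpace ℝ (Fin n) → ℝ) : ballLuxWeak Φ a r f =
    sInf {lam | ∃ l : ℝ, 0 < l ∧ lam = ENNReal.ofReal l ∧ WeakLuxAdmissible Φ a r f l} :=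
  rfl

theorem luxAdmissible_indicator_iff (hΦ0 : Φ 0 = 0) {E : Set (EuclideanSpace ℝ (Fin n))}
    (hE : MeasurableSet E) (l : ℝ) :
    LuxAdmissible Φ a r χ[E] l ↔
      ENNReal.ofReal (Φ l⁻¹) * volume (Metric.ball a r ∩ E) ≤ volume (Metric.ball a r) := by
  have hfun : (fun x => Φ (|χ[E] x| / l)) = E.indicator fun _ => Φ l⁻¹ := by
    ext x
    by_cases hx : x ∈ E <;> simp [hx, hΦ0]
  have hfin : volume (Metric.ball a r ∩ E) ≠ ⊤ :=
    measure_ne_top_of_subset inter_subset_left measure_ball_lt_top.ne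
  rw [LuxAdmissible, hfun, setIntegral_indicator hE, setIntegral_const, smul_eq_mul,
    ← ENNReal.ofReal_le_ofReal_iff ENNReal.toReal_nonneg,
    ENNReal.ofReal_toReal measure_ball_lt_top.ne, measureReal_def,
    ENNReal.ofReal_mul ENNReal.toReal_nonneg, ENNReal.ofReal_toReal hfin, mul_comm]

theorem weakLuxAdmissible_indicator_iff (E : Set (EuclideanSpace ℝ (Fin n))) (l : ℝ) :
    WeakLuxAdmissible Φ a r χ[E] l ↔ ∀ t : ℝ, 0 < t → t < l⁻¹ →
      ENNReal.ofReal (Φ t) * volume (Metric.ball a r ∩ E) ≤ volume (Metric.ball a r) := by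
  refine forall₂_congr fun t ht => ?_
  by_cases htl : t < l⁻¹
  · have hset : {x | x ∈ Metric.ball a r ∧ t < |χ[E] x| / l} = Metric.ball a r ∩ E := by
      ext x
      by_cases hx : x ∈ E <;> simp [hx, htl, ht.not_gt]
    simp only [hset, htl, forall_const]
  · have hset : {x | x ∈ Metric.ball a r ∧ t < |χ[E] x| / l} = ∅ := by
      ext x
      by_cases hx : x ∈ E <;> simp [hx, htl, ht.not_gt]
    simp only [hset, htl, measure_empty, mul_zero, zero_le, IsEmpty.forall_iff]

theorem ballLux_indicator_eq_ballLuxWeak (hΦ : IsYoung Φ) {E : Set (EuclideanSpace ℝ (Fin n))}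
    (hE : MeasurableSet E) : ballLux Φ a r χ[E] = ballLuxWeak Φ a r χ[E] := by
  rw [ballLux_eq_sInf, ballLuxWeak_eq_sInf]
  refine le_antisymm (le_sInf ?_) (sInf_le_sInf ?_)
  · rintro _ ⟨l, hl, rfl, hweak⟩
    refine sInf_ofReal_le_of_forall_lt fun l' hl' hll' => ?_
    have hinv : l'⁻¹ < l⁻¹ := inv_strictAnti₀ hl ((ENNReal.ofReal_lt_ofReal_iff hl').1 hll')
    exact (luxAdmissible_indicator_iff hΦ.2.1 hE l').2
      ((weakLuxAdmissible_indicator_iff E l).1 hweak _ (inv_pos.2 hl') hinv)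
  · rintro _ ⟨l, hl, rfl, hstrong⟩
    refine ⟨l, hl, rfl, (weakLuxAdmissible_indicator_iff E l).2 fun t ht htl => ?_⟩
    calc ENNReal.ofReal (Φ t) * volume (Metric.ball a r ∩ E)
        ≤ ENNReal.ofReal (Φ l⁻¹) * volume (Metric.ball a r ∩ E) := by
          gcongr
          exact hΦ.monotoneOn ht.le (inv_pos.2 hl).le htl.le
      _ ≤ volume (Metric.ball a r) := (luxAdmissible_indicator_iff hΦ.2.1 hE l).1 hstrong

theorem omNorm_indicator_eq_womNorm (hΦ : IsYoung Φ) (φ : ℝ → ℝ)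
    {E : Set (EuclideanSpace ℝ (Fin n))} (hE : MeasurableSet E) :
    omNorm Φ φ χ[E] = womNorm Φ φ χ[E] := by
  simp only [omNorm, womNorm, ballLux_indicator_eq_ballLuxWeak hΦ hE]

-- `f` need not be measurable; a measurable hull of its superlevel set has the same measure on balls.
theorem ofReal_mul_ballLuxWeak_indicator_superlevel_le (f : EuclideanSpace ℝ (Fin n) → ℝ)
    {s : ℝ} (hs : 0 < s) :
    ENNReal.ofReal s * ballLuxWeak Φ a r χ[toMeasurable volume {y | s < |f y|}] ≤
      ballLuxWeak Φ a r f := by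
  rw [ballLuxWeak_eq_sInf f]
  refine le_sInf ?_
  rintro _ ⟨l, hl, rfl, hweak⟩
  set S := {y | s < |f y|}
  have hscaled : WeakLuxAdmissible Φ a r χ[toMeasurable volume S] (l / s) := by
    refine (weakLuxAdmissible_indicator_iff _ _).2 fun t ht hts => ?_
    have hsub : S ∩ Metric.ball a r ⊆ {x | x ∈ Metric.ball a r ∧ t < |f x| / l} := by
      rintro x ⟨hxS, hxB⟩
      rw [inv_div] at hts
      exact ⟨hxB, hts.trans (div_lt_div_of_pos_right hxS hl)⟩
    calc ENNReal.ofReal (Φ t) * volume (Metric.ball a r ∩ toMeasurable volume S)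
        = ENNReal.ofReal (Φ t) * volume (S ∩ Metric.ball a r) := by
          rw [inter_comm, Measure.measure_toMeasurable_inter_of_sFinite measurableSet_ball]
      _ ≤ ENNReal.ofReal (Φ t) * volume {x | x ∈ Metric.ball a r ∧ t < |f x| / l} := by
          gcongr
      _ ≤ volume (Metric.ball a r) := hweak t ht
  calc ENNReal.ofReal s * ballLuxWeak Φ a r χ[toMeasurable volume S]
      ≤ ENNReal.ofReal s * ENNReal.ofReal (l / s) := by
        gcongr
        rw [ballLuxWeak_eq_sInf]
        exact sInf_le ⟨l / s, div_pos hl hs, rfl, hscaled⟩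
    _ = ENNReal.ofReal l := by rw [← ENNReal.ofReal_mul hs.le, mul_div_cancel₀ l hs.ne']

theorem ofReal_mul_womNorm_indicator_superlevel_le (f : EuclideanSpace ℝ (Fin n) → ℝ)
    {s : ℝ} (hs : 0 < s) :
    ENNReal.ofReal s * womNorm Φ φ χ[toMeasurable volume {y | s < |f y|}] ≤
      womNorm Φ φ f := by
  simp only [womNorm, ENNReal.mul_iSup]
  refine iSup_mono fun a => iSup₂_mono fun r _ => ?_
  rw [mul_left_comm]
  gcongr
  exact ofReal_mul_ballLuxWeak_indicator_superlevel_le f hs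

theorem ballLuxWeak_le_ofReal_mul_womNorm (hr : 0 < r) (hφr : 0 < φ r)
    (f : EuclideanSpace ℝ (Fin n) → ℝ) :
    ballLuxWeak Φ a r f ≤ ENNReal.ofReal (φ r) * womNorm Φ φ f :=
  (ENNReal.inv_mul_le_iff (ENNReal.ofReal_pos.2 hφr).ne' ENNReal.ofReal_ne_top).1 <|
    le_iSup_of_le a <| le_iSup₂_of_le r hr le_rfl

theorem young_mul_volume_le_of_ballLuxWeak_indicator_lt {E : Set (EuclideanSpace ℝ (Fin n))}
    {t : ℝ} (ht : 0 < t) (h : ballLuxWeak Φ a r χ[E] < ENNReal.ofReal t⁻¹) :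
    ENNReal.ofReal (Φ t) * volume (Metric.ball a r ∩ E) ≤ volume (Metric.ball a r) := by
  rw [ballLuxWeak_eq_sInf] at h
  obtain ⟨_, ⟨l, hl, rfl, hweak⟩, hlt⟩ := sInf_lt_iff.1 h
  have htl : t < l⁻¹ :=
    (lt_inv_comm₀ hl ht).1 ((ENNReal.ofReal_lt_ofReal_iff (inv_pos.2 ht)).1 hlt)
  exact (weakLuxAdmissible_indicator_iff E l).1 hweak t ht htl

theorem womNorm_comp_le_of_indicator (hφ : ∀ r : ℝ, 0 < r → 0 < φ r)
    {ψ : EuclideanSpace ℝ (Fin n) → EuclideanSpace ℝ (Fin n)} {K : ℝ≥0∞}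
    (hK : ∀ A, MeasurableSet A → womNorm Φ φ χ[ψ ⁻¹' A] ≤ K * womNorm Φ φ χ[A])
    (f : EuclideanSpace ℝ (Fin n) → ℝ) :
    womNorm Φ φ (f ∘ ψ) ≤ K * womNorm Φ φ f := by
  refine iSup_le fun a => iSup₂_le fun r hr => ?_
  have hφr : ENNReal.ofReal (φ r) ≠ 0 := (ENNReal.ofReal_pos.2 (hφ r hr)).ne'
  rw [ENNReal.inv_mul_le_iff hφr ENNReal.ofReal_ne_top, ballLuxWeak_eq_sInf]
  refine sInf_ofReal_le_of_forall_lt fun l hl hbound t ht => ?_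
  set E := toMeasurable volume {y | l * t < |f y|}
  have hlt : 0 < l * t := mul_pos hl ht
  have hlt' : ENNReal.ofReal (l * t) ≠ 0 := (ENNReal.ofReal_pos.2 hlt).ne'
  have hsmall : ballLuxWeak Φ a r χ[ψ ⁻¹' E] < ENNReal.ofReal t⁻¹ := by
    calc ballLuxWeak Φ a r χ[ψ ⁻¹' E]
        ≤ ENNReal.ofReal (φ r) * womNorm Φ φ χ[ψ ⁻¹' E] :=
          ballLuxWeak_le_ofReal_mul_womNorm hr (hφ r hr) _
      _ ≤ ENNReal.ofReal (φ r) * (K * (womNorm Φ φ f / ENNReal.ofReal (l * t))) := by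
          gcongr
          refine (hK E (measurableSet_toMeasurable _ _)).trans ?_
          gcongr
          rw [ENNReal.le_div_iff_mul_le (Or.inl hlt') (Or.inl ENNReal.ofReal_ne_top), mul_comm]
          exact ofReal_mul_womNorm_indicator_superlevel_le f hlt
      _ = ENNReal.ofReal (φ r) * (K * womNorm Φ φ f) / ENNReal.ofReal (l * t) := by
          simp only [mul_div_assoc]
      _ < ENNReal.ofReal l / ENNReal.ofReal (l * t) :=
          ENNReal.div_lt_div_right hlt' ENNReal.ofReal_ne_top hbound
      _ = ENNReal.ofReal t⁻¹ := by
          rw [← ENNReal.ofReal_div_of_pos hlt, div_mul_cancel_left₀ hl.ne']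
  have hsub :
      {x | x ∈ Metric.ball a r ∧ t < |(f ∘ ψ) x| / l} ⊆ Metric.ball a r ∩ ψ ⁻¹' E :=
    fun x ⟨hxB, hx⟩ => ⟨hxB, subset_toMeasurable _ _ (show l * t < |f (ψ x)| by
      rwa [lt_div_iff₀ hl, mul_comm] at hx)⟩
  calc ENNReal.ofReal (Φ t) * volume {x | x ∈ Metric.ball a r ∧ t < |(f ∘ ψ) x| / l}
      ≤ ENNReal.ofReal (Φ t) * volume (Metric.ball a r ∩ ψ ⁻¹' E) := by gcongr
    _ ≤ volume (Metric.ball a r) := young_mul_volume_le_of_ballLuxWeak_indicator_lt ht hsmall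

end OrliczMorrey

theorem statement2_general {n : ℕ} (Φ φ : ℝ → ℝ) (hΦ : IsYoung Φ) (hφ : G1dec φ)
    (ψ : EuclideanSpace ℝ (Fin n) → EuclideanSpace ℝ (Fin n)) (hψ : Measurable ψ) :
    (∃ K > 0, ∀ f : EuclideanSpace ℝ (Fin n) → ℝ,
        womNorm Φ φ (f ∘ ψ) ≤ ENNReal.ofReal K * womNorm Φ φ f) ↔
    (∃ K > 0, ∀ A : Set (EuclideanSpace ℝ (Fin n)), MeasurableSet A →
        omNorm Φ φ (Set.indicator (ψ ⁻¹' A) (fun _ => (1 : ℝ))) ≤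
          ENNReal.ofReal K * omNorm Φ φ (Set.indicator A (fun _ => (1 : ℝ)))) := by
  have hweak : ∀ A : Set (EuclideanSpace ℝ (Fin n)), MeasurableSet A →
      omNorm Φ φ (Set.indicator A fun _ => (1 : ℝ)) =
        womNorm Φ φ (Set.indicator A fun _ => (1 : ℝ)) :=
    fun A hA => omNorm_indicator_eq_womNorm hΦ φ hA
  constructor
  · rintro ⟨K, hK, hC⟩
    refine ⟨K, hK, fun A hA => ?_⟩
    rw [hweak _ (hA.preimage hψ), hweak A hA]
    -- `χ_A ∘ ψ` and `χ_{ψ⁻¹A}` agree definitionally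
    exact hC (Set.indicator A fun _ => 1)
  · rintro ⟨K, hK, hC⟩
    refine ⟨K, hK, womNorm_comp_le_of_indicator hφ.1 fun A hA => ?_⟩
    rw [← hweak _ (hA.preimage hψ), ← hweak A hA]
    exact hC A hA

/-- For a measurable nonsingular `ψ : ℝⁿ → ℝⁿ`, the composition operator
`C_ψ` is bounded on the weak Orlicz–Morrey space `wM_Φ^φ(ℝⁿ)` if and only if there is
`K > 0` with `‖χ_{ψ⁻¹(A)}‖_{M_Φ^φ} ≤ K ‖χ_A‖_{M_Φ^φ}` for all measurable `A`. -/
theorem statement2 {n : ℕ} (Φ φ : ℝ → ℝ) (hΦ : IsYoung Φ) (hφ : G1dec φ)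
    (ψ : EuclideanSpace ℝ (Fin n) → EuclideanSpace ℝ (Fin n)) (hψ : Measurable ψ)
    (hns : ∀ A : Set (EuclideanSpace ℝ (Fin n)), MeasurableSet A → volume A = 0 →
      volume (ψ ⁻¹' A) = 0) :
    (∃ K > 0, ∀ f : EuclideanSpace ℝ (Fin n) → ℝ,
        womNorm Φ φ (f ∘ ψ) ≤ ENNReal.ofReal K * womNorm Φ φ f) ↔
    (∃ K > 0, ∀ A : Set (EuclideanSpace ℝ (Fin n)), MeasurableSet A →
        omNorm Φ φ (Set.indicator (ψ ⁻¹' A) (fun _ => (1 : ℝ))) ≤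
          ENNReal.ofReal K * omNorm Φ φ (Set.indicator A (fun _ => (1 : ℝ)))) :=
  statement2_general Φ φ hΦ hφ ψ hψ
end

section
/- Let Φ be a Young function and ψ:ℝⁿ→ℝⁿ a measurable nonsingular transformation, and let K>0. Then the modular inequality ∫_{ℝⁿ}Φ(|f(ψ(x))|)dx ≤ K∫_{ℝⁿ}Φ(|f(x)|)dx holds for every measurable f with ∫_{ℝⁿ}Φ(|f(x)|)dx < ∞ if and only if |ψ⁻¹(A)| ≤ K|A| for every measurable set A⊂ℝⁿ. -/
open MeasureTheory Filter Set
open scoped ENNReal NNReal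

/-- For a Young function `Φ`, a measurable nonsingular
`ψ : ℝⁿ → ℝⁿ` and `K > 0`, the modular inequality
`∫ Φ(|f ∘ ψ|) ≤ K ∫ Φ(|f|)` holds for all measurable `f` with `∫ Φ(|f|) < ∞`
if and only if `|ψ⁻¹(A)| ≤ K |A|` for every measurable set `A`. -/
theorem statement7 {n : ℕ} (Φ : ℝ → ℝ) (hΦ : IsYoung Φ)
    (ψ : EuclideanSpace ℝ (Fin n) → EuclideanSpace ℝ (Fin n)) (hψ : Measurable ψ)
    (hns : ∀ A : Set (EuclideanSpace ℝ (Fin n)), MeasurableSet A → volume A = 0 →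
      volume (ψ ⁻¹' A) = 0)
    (K : ℝ) (hK : 0 < K) :
    (∀ f : EuclideanSpace ℝ (Fin n) → ℝ, Measurable f →
        (∫⁻ x, ENNReal.ofReal (Φ |f x|)) ≠ ⊤ →
        (∫⁻ x, ENNReal.ofReal (Φ |f (ψ x)|)) ≤
          ENNReal.ofReal K * ∫⁻ x, ENNReal.ofReal (Φ |f x|)) ↔
    (∀ A : Set (EuclideanSpace ℝ (Fin n)), MeasurableSet A →
        volume (ψ ⁻¹' A) ≤ ENNReal.ofReal K * volume A) := by
  obtain ⟨hconv, h0, hnn, htop⟩ := hΦ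
  have hK0 : ENNReal.ofReal K ≠ 0 := by simp [ENNReal.ofReal_eq_zero, hK.not_ge]
  constructor
  · intro h A hA
    rcases eq_top_or_lt_top (volume A) with hAt | hAfin
    · rw [hAt, ENNReal.mul_top hK0]; exact le_top
    · obtain ⟨c, hc1, hΦc⟩ :=
        ((eventually_ge_atTop (1 : ℝ)).and (htop.eventually_ge_atTop 1)).exists
      have hc0 : (0 : ℝ) ≤ c := by linarith
      have hΦc0 : 0 < Φ c := by linarith
      set f : EuclideanSpace ℝ (Fin n) → ℝ := A.indicator (fun _ => c) with hfdef
      have hf : Measurable f := measurable_const.indicator hA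
      have key : ∀ x, ENNReal.ofReal (Φ |f x|)
          = A.indicator (fun _ => ENNReal.ofReal (Φ c)) x := by
        intro x
        by_cases hx : x ∈ A <;>
          simp [hfdef, Set.indicator_of_mem, Set.indicator_of_notMem, hx,
            abs_of_nonneg hc0, h0]
      have hI1 : (∫⁻ x, ENNReal.ofReal (Φ |f x|))
          = ENNReal.ofReal (Φ c) * volume A := by
        simp only [key]
        rw [lintegral_indicator hA]
        simp [mul_comm]
      have hI2 : (∫⁻ x, ENNReal.ofReal (Φ |f (ψ x)|))
          = ENNReal.ofReal (Φ c) * volume (ψ ⁻¹' A) := by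
        have : ∀ x, ENNReal.ofReal (Φ |f (ψ x)|)
            = (ψ ⁻¹' A).indicator (fun _ => ENNReal.ofReal (Φ c)) x := by
          intro x
          rw [key (ψ x)]
          by_cases hx : ψ x ∈ A <;>
            simp [Set.indicator_of_mem, Set.indicator_of_notMem, hx]
        simp only [this]
        rw [lintegral_indicator (hψ hA)]
        simp [mul_comm]
      have hfin : (∫⁻ x, ENNReal.ofReal (Φ |f x|)) ≠ ⊤ := by
        rw [hI1]
        exact ENNReal.mul_ne_top ENNReal.ofReal_ne_top hAfin.ne
      have := h f hf hfin
      rw [hI1, hI2] at this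
      have h' : ENNReal.ofReal (Φ c) * volume (ψ ⁻¹' A)
          ≤ ENNReal.ofReal (Φ c) * (ENNReal.ofReal K * volume A) := by
        calc ENNReal.ofReal (Φ c) * volume (ψ ⁻¹' A)
            ≤ ENNReal.ofReal K * (ENNReal.ofReal (Φ c) * volume A) := this
          _ = ENNReal.ofReal (Φ c) * (ENNReal.ofReal K * volume A) := by ring
      exact (ENNReal.mul_le_mul_iff_right (by simp [ENNReal.ofReal_eq_zero, hΦc0.not_ge])
        ENNReal.ofReal_ne_top).mp h'
  · intro h f hf _
    have hcont : ContinuousOn Φ (Set.Ioi 0) :=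
      (hconv.subset (Set.Ioi_subset_Ici le_rfl) (convex_Ioi 0)).continuousOn isOpen_Ioi
    set g0 : ℝ → ℝ := fun t => if t ≤ 0 then 0 else Φ t with hg0def
    have hg0m : Measurable g0 := by
      apply measurable_of_continuousOn_compl_singleton (0 : ℝ)
      intro t ht
      have ht' : t ≠ 0 := by simpa using ht
      rcases ht'.lt_or_gt with htn | htp
      · have hev : g0 =ᶠ[nhds t] fun _ => (0 : ℝ) := by
          filter_upwards [Iio_mem_nhds htn] with s hs
          simp [hg0def, (Set.mem_Iio.mp hs).le]
        exact hev.continuousAt.continuousWithinAt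
      · have hev : Φ =ᶠ[nhds t] g0 := by
          filter_upwards [Ioi_mem_nhds htp] with s hs
          simp [hg0def, not_le.mpr (Set.mem_Ioi.mp hs)]
        exact ((hcont.continuousAt (Ioi_mem_nhds htp)).congr hev).continuousWithinAt
    have hg0eq : ∀ x, ENNReal.ofReal (Φ |f x|) = ENNReal.ofReal (g0 |f x|) := by
      intro x
      rcases eq_or_lt_of_le (abs_nonneg (f x)) with h0' | hpos
      · simp [hg0def, ← h0', h0]
      · simp [hg0def, not_le.mpr hpos]
    have hg : Measurable fun x => ENNReal.ofReal (g0 |f x|) :=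
      ENNReal.measurable_ofReal.comp (hg0m.comp hf.abs)
    have hle : Measure.map ψ (volume : Measure (EuclideanSpace ℝ (Fin n)))
        ≤ ENNReal.ofReal K • volume := by
      rw [Measure.le_iff]
      intro s hs
      rw [Measure.map_apply hψ hs, Measure.smul_apply, smul_eq_mul]
      exact h s hs
    calc (∫⁻ x, ENNReal.ofReal (Φ |f (ψ x)|))
        = ∫⁻ x, ENNReal.ofReal (g0 |f (ψ x)|) := by simp only [hg0eq]
      _ = ∫⁻ y, ENNReal.ofReal (g0 |f y|) ∂(Measure.map ψ volume) :=
          (lintegral_map hg hψ).symm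
      _ ≤ ∫⁻ y, ENNReal.ofReal (g0 |f y|) ∂(ENNReal.ofReal K • volume) :=
          lintegral_mono' hle le_rfl
      _ = ENNReal.ofReal K * ∫⁻ y, ENNReal.ofReal (g0 |f y|) := lintegral_smul_measure _ _
      _ = ENNReal.ofReal K * ∫⁻ x, ENNReal.ofReal (Φ |f x|) := by simp only [hg0eq]
end
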